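/- arXiv:1307.1229 — 2 statements merged into one kernel-verified Lean document; each statement's English description precedes it below -/
import Mathlib

section
/- Let f : ℝ → ℝ be differentiable, let h be the convex envelope of f on [0,M], and suppose h is affine on a subinterval [p,q] ⊆ [0,M] with 0 < p < q < M, and h(p) = f(p), h(q) = f(q), while h ≤ f on [0,M]. Then f'(p) = (f(q)-f(p))/(q-p) = f'(q); i.e., the chord of an interior linear piece of the convex envelope is tangent to f at both endpoints. -/
/-- The chord of an interior linear piece of the convex envelope is tangent to f
at both endpoints. -/
theorem interior_linear_piece_tangent (f h : ℝ → ℝ) (M p q : ℝ)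
    (hdiff : Differentiable ℝ f)
    (hconv : ConvexOn ℝ (Set.Icc 0 M) h)
    (hle : ∀ u ∈ Set.Icc 0 M, h u ≤ f u)
    (hp : 0 < p) (hpq : p < q) (hqM : q < M)
    (c d : ℝ) (haff : ∀ u ∈ Set.Icc p q, h u = c * u + d)
    (hhp : h p = f p) (hhq : h q = f q) :
    deriv f p = (f q - f p) / (q - p) ∧ (f q - f p) / (q - p) = deriv f q := by
  have hpM : p ∈ Set.Icc (0:ℝ) M := ⟨hp.le, (hpq.trans hqM).le⟩
  have hqM' : q ∈ Set.Icc (0:ℝ) M := ⟨(hp.trans hpq).le, hqM.le⟩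
  have hhp' : h p = c * p + d := haff p ⟨le_refl p, hpq.le⟩
  have hhq' : h q = c * q + d := haff q ⟨hpq.le, le_refl q⟩
  have hfp : f p = c * p + d := hhp ▸ hhp'
  have hfq : f q = c * q + d := hhq ▸ hhq'
  have hqp : (0:ℝ) < q - p := by linarith
  have hslope : (f q - f p) / (q - p) = c := by
    rw [hfp, hfq]; field_simp; ring
  -- key: the affine function lies below h on all of [0, M]
  have key : ∀ u ∈ Set.Icc (0:ℝ) M, c * u + d ≤ h u := by
    intro u hu
    rcases lt_trichotomy u p with h1 | h1 | h1
    · have := hconv.slope_mono_adjacent hu hqM' h1 hpq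
      rw [hhp', hhq'] at this
      have h2 : (c * q + d - (c * p + d)) / (q - p) = c := by field_simp; ring
      rw [h2] at this
      have hup : (0:ℝ) < p - u := by linarith
      have := (div_le_iff₀ hup).mp this
      linarith
    · subst h1; rw [hhp']
    · rcases le_or_gt u q with h2 | h2
      · rw [haff u ⟨h1.le, h2⟩]
      · have := hconv.slope_mono_adjacent hpM hu hpq h2
        rw [hhp', hhq'] at this
        have h3 : (c * q + d - (c * p + d)) / (q - p) = c := by field_simp; ring
        rw [h3] at this
        have hqu : (0:ℝ) < u - q := by linarith
        have := (le_div_iff₀ hqu).mp this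
        linarith
  -- g = f - affine is ≥ 0 on [0,M], zero at p and q
  set g : ℝ → ℝ := fun u => f u - (c * u + d) with hg
  have hg0 : ∀ u ∈ Set.Icc (0:ℝ) M, 0 ≤ g u := by
    intro u hu
    have := key u hu
    have := hle u hu
    simp only [hg]; linarith
  have hnhds : ∀ x : ℝ, 0 < x → x < M → Set.Icc (0:ℝ) M ∈ nhds x := by
    intro x hx hxM
    exact Icc_mem_nhds hx hxM
  have gdiff : Differentiable ℝ g := by
    apply hdiff.sub
    exact (differentiable_id.const_mul c).add_const d
  have hloc : ∀ x : ℝ, 0 < x → x < M → f x = c * x + d → deriv f x = c := by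
    intro x hx hxM hfx
    have hmin : IsLocalMin g x := by
      have hgx : g x = 0 := by simp [hg, hfx]
      refine Filter.eventually_of_mem (hnhds x hx hxM) ?_
      intro u hu
      rw [hgx]; exact hg0 u hu
    have hd0 : deriv g x = 0 := hmin.deriv_eq_zero
    have : deriv g x = deriv f x - c := by
      have h1 : HasDerivAt (fun u : ℝ => c * u + d) c x := by
        simpa using ((hasDerivAt_id x).const_mul c).add_const d
      exact (((hdiff x).hasDerivAt.sub h1)).deriv
    rw [this] at hd0; linarith
  constructor
  · rw [hslope]; exact hloc p hp (hpq.trans hqM) hfp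
  · rw [hslope]; exact (hloc q (hp.trans hpq) hqM hfq).symm
end

section
/- Let f : ℝ → ℝ be continuous on [0,M], let h be the greatest convex minorant of f on [0,M], and suppose h(u₀) < f(u₀) for some u₀ ∈ (0,M). Then h is affine on a neighborhood of u₀ within (0,M); i.e., wherever the convex envelope lies strictly below f in the interior, it is locally linear. -/
/-!
On a small interval `[a, b]` around `u₀`, `h` stays below and `f` stays above a common level, so
the secant of `h` over `[a, b]`, which is bounded there by `max (h a) (h b)`, lies below `f`.
Outside `[a, b]` the secant lies below `h` by monotonicity of slopes, so `max h secant` is a convex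
minorant of `f`. Maximality of `h` puts `h` above the secant on `[a, b]`, convexity puts it below.
-/

open Set Filter Topology

lemma slope_mul_sub_add_self {k : Type*} [Field k] (h : k → k) (a b : k) :
    slope h a b * (b - a) + h a = h b := by
  rw [mul_comm, ← smul_eq_mul, sub_smul_slope, vsub_eq_sub, sub_add_cancel]

section Secant

variable {𝕜 : Type*} [Field 𝕜] [LinearOrder 𝕜] [IsStrictOrderedRing 𝕜] {s : Set 𝕜}
  {h : 𝕜 → 𝕜} {a b u : 𝕜}

lemma convexOn_mul_sub_add (c x₀ d : 𝕜) (hs : Convex 𝕜 s) :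
    ConvexOn 𝕜 s fun x => c * (x - x₀) + d := by
  refine ⟨hs, fun x _ y _ p q _ _ hpq => le_of_eq ?_⟩
  simp only [smul_eq_mul]
  linear_combination (c * x₀ - d) * hpq

lemma ConvexOn.le_slope_mul_sub_add (hh : ConvexOn 𝕜 s h) (ha : a ∈ s) (hb : b ∈ s)
    (hu : u ∈ Icc a b) : h u ≤ slope h a b * (u - a) + h a := by
  rcases hu.1.eq_or_lt with rfl | hau
  · simp
  have hba : a < b := hau.trans_le hu.2
  have hslope : slope h a u ≤ slope h a b :=
    hh.slope_mono ha ⟨hh.1.ordConnected.out ha hb hu, hau.ne'⟩ ⟨hb, hba.ne'⟩ hu.2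
  rw [slope_def_field, div_le_iff₀ (sub_pos.2 hau)] at hslope
  linarith

lemma ConvexOn.slope_mul_sub_add_le (hh : ConvexOn 𝕜 s h) (ha : a ∈ s) (hb : b ∈ s)
    (hab : a < b) (hu : u ∈ s) (hu' : u ∉ Ioo a b) : slope h a b * (u - a) + h a ≤ h u := by
  rcases lt_trichotomy u a with hua | rfl | hau
  · have hslope : slope h a u ≤ slope h a b :=
      hh.slope_mono ha ⟨hu, hua.ne⟩ ⟨hb, hab.ne'⟩ (hua.trans hab).le
    rw [slope_def_field, div_le_iff_of_neg (sub_neg.2 hua)] at hslope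
    linarith
  · simp
  · have hbu : b ≤ u := not_lt.1 fun hub => hu' ⟨hau, hub⟩
    have hslope : slope h a b ≤ slope h a u :=
      hh.slope_mono ha ⟨hb, hab.ne'⟩ ⟨hu, hau.ne'⟩ hbu
    rw [slope_def_field h a u, le_div_iff₀ (sub_pos.2 hau)] at hslope
    linarith

theorem eqOn_secant_of_greatest_convex_minorant {f : 𝕜 → 𝕜} (hh : ConvexOn 𝕜 s h)
    (hle : ∀ u ∈ s, h u ≤ f u)
    (hgreatest : ∀ g : 𝕜 → 𝕜, ConvexOn 𝕜 s g → (∀ x ∈ s, g x ≤ f x) → ∀ u ∈ s, g u ≤ h u)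
    (ha : a ∈ s) (hb : b ∈ s) (hab : a < b) (hf : ∀ u ∈ Icc a b, max (h a) (h b) ≤ f u) :
    EqOn h (fun u => slope h a b * (u - a) + h a) (Icc a b) := by
  set secant : 𝕜 → 𝕜 := fun u => slope h a b * (u - a) + h a
  have hsecant : ConvexOn 𝕜 s secant := convexOn_mul_sub_add _ _ _ hh.1
  have hsecant_le_f : ∀ u ∈ Icc a b, secant u ≤ f u := fun u hu => by
    have := hsecant.le_max_of_mem_Icc ha hb hu
    simp only [secant, sub_self, mul_zero, zero_add, slope_mul_sub_add_self] at this
    exact this.trans (hf u hu)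
  have hglued_le_f : ∀ u ∈ s, (h ⊔ secant) u ≤ f u := fun u hu => by
    by_cases hu' : u ∈ Icc a b
    · exact max_le (hle u hu) (hsecant_le_f u hu')
    · rw [Pi.sup_apply, max_eq_left (hh.slope_mul_sub_add_le ha hb hab hu
        fun hu'' => hu' (Ioo_subset_Icc_self hu''))]
      exact hle u hu
  intro u hu
  have hus : u ∈ s := hh.1.ordConnected.out ha hb hu
  exact (hh.le_slope_mul_sub_add ha hb hu).antisymm
    ((le_max_right _ _).trans (hgreatest _ (hh.sup hsecant) hglued_le_f u hus))

end Secant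

lemma exists_closedBall_subset_forall_lt {X : Type*} [PseudoMetricSpace X] {f g : X → ℝ}
    {s : Set X} {x₀ : X} (hs : s ∈ 𝓝 x₀) (hf : ContinuousAt f x₀) (hg : ContinuousAt g x₀)
    (hlt : f x₀ < g x₀) :
    ∃ ε > 0, Metric.closedBall x₀ ε ⊆ s ∧
      ∀ x ∈ Metric.closedBall x₀ ε, ∀ y ∈ Metric.closedBall x₀ ε, f x < g y := by
  obtain ⟨m, hfm, hmg⟩ := exists_between hlt
  have hev : ∀ᶠ x in 𝓝 x₀, x ∈ s ∧ f x < m ∧ m < g x := by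
    filter_upwards [hs, hf.eventually (gt_mem_nhds hfm), hg.eventually (lt_mem_nhds hmg)]
      with x hxs hfx hgx using ⟨hxs, hfx, hgx⟩
  obtain ⟨ε, hε, hball⟩ := Metric.nhds_basis_closedBall.eventually_iff.1 hev
  exact ⟨ε, hε, fun x hx => (hball hx).1, fun x hx y hy => (hball hx).2.1.trans (hball hy).2.2⟩

theorem envelope_locally_affine_general (f h : ℝ → ℝ) (M : ℝ)
    (hf : ContinuousOn f (Set.Icc 0 M))
    (hconv : ConvexOn ℝ (Set.Icc 0 M) h)
    (hle : ∀ u ∈ Set.Icc 0 M, h u ≤ f u)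
    (hgreatest : ∀ g : ℝ → ℝ, ConvexOn ℝ (Set.Icc 0 M) g →
      (∀ x ∈ Set.Icc 0 M, g x ≤ f x) → ∀ u ∈ Set.Icc 0 M, g u ≤ h u)
    (u₀ : ℝ) (hu₀ : u₀ ∈ Set.Ioo 0 M) (hstrict : h u₀ < f u₀) :
    ∃ ε > 0, Set.Icc (u₀ - ε) (u₀ + ε) ⊆ Set.Ioo 0 M ∧
      ∃ c d : ℝ, ∀ u ∈ Set.Icc (u₀ - ε) (u₀ + ε), h u = c * u + d := by
  have hnhds : Ioo 0 M ∈ 𝓝 u₀ := isOpen_Ioo.mem_nhds hu₀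
  have hh : ContinuousAt h u₀ :=
    hconv.continuousOn_interior.continuousAt (by rwa [interior_Icc])
  obtain ⟨ε, hε, hsub, hlt⟩ := exists_closedBall_subset_forall_lt hnhds hh
    (hf.continuousAt (mem_of_superset hnhds Ioo_subset_Icc_self)) hstrict
  rw [Real.closedBall_eq_Icc] at hsub hlt
  set a := u₀ - ε
  set b := u₀ + ε
  have ha : a ∈ Icc a b := left_mem_Icc.2 (by linarith)
  have hb : b ∈ Icc a b := right_mem_Icc.2 (by linarith)
  have hsecant := eqOn_secant_of_greatest_convex_minorant hconv hle hgreatest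
    (Ioo_subset_Icc_self (hsub ha)) (Ioo_subset_Icc_self (hsub hb)) (by linarith)
    fun u hu => (max_lt (hlt a ha u hu) (hlt b hb u hu)).le
  refine ⟨ε, hε, hsub, slope h a b, h a - slope h a b * a, fun u hu => ?_⟩
  rw [hsecant hu]
  ring

/-- Where the greatest convex minorant of a continuous f lies strictly below f in the
interior, it is locally affine. -/
theorem envelope_locally_affine (f h : ℝ → ℝ) (M : ℝ) (hM : 0 < M)
    (hf : ContinuousOn f (Set.Icc 0 M))
    (hconv : ConvexOn ℝ (Set.Icc 0 M) h)
    (hle : ∀ u ∈ Set.Icc 0 M, h u ≤ f u)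
    (hgreatest : ∀ g : ℝ → ℝ, ConvexOn ℝ (Set.Icc 0 M) g →
      (∀ x ∈ Set.Icc 0 M, g x ≤ f x) → ∀ u ∈ Set.Icc 0 M, g u ≤ h u)
    (u₀ : ℝ) (hu₀ : u₀ ∈ Set.Ioo 0 M) (hstrict : h u₀ < f u₀) :
    ∃ ε > 0, Set.Icc (u₀ - ε) (u₀ + ε) ⊆ Set.Ioo 0 M ∧
      ∃ c d : ℝ, ∀ u ∈ Set.Icc (u₀ - ε) (u₀ + ε), h u = c * u + d :=
  envelope_locally_affine_general f h M hf hconv hle hgreatest u₀ hu₀ hstrict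
end
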